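/- For all m, n ∈ ℤ: if f_n = R then (Q_{3m,n+1}, Q_{3m+1,n+1}, Q_{3m+2,n+1}) = (Q_{3m,n}, Q_{3m+1,n}·Q_{3m+2,n}·Q_{3m+1,n}⁻¹, Q_{3m+1,n}), and if f_n = L then (Q_{3m,n+1}, Q_{3m+1,n+1}, Q_{3m+2,n+1}) = (Q_{3m+1,n}, Q_{3m+1,n}·Q_{3m,n}·Q_{3m+1,n}⁻¹, Q_{3m+2,n}). -/

import Mathlib

/-- The relators of the presentation ⟨A, B, C | A² = B² = C² = 1⟩. -/
def rels : Set (FreeGroup (Fin 3)) :=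
  {FreeGroup.of 0 * FreeGroup.of 0, FreeGroup.of 1 * FreeGroup.of 1,
   FreeGroup.of 2 * FreeGroup.of 2}

/-- `G` is the group ⟨A, B, C | A² = B² = C² = 1⟩, the free product of three copies of ℤ/2. -/
abbrev G : Type := PresentedGroup rels

def A : G := PresentedGroup.of 0
def B : G := PresentedGroup.of 1
def C : G := PresentedGroup.of 2

/-- The distinguished element `D = C·B·A`. -/
def D : G := C * B * A

/-! R and L both fix D = C·B·A (for R this uses B² = 1), so they commute with the conjugations
by Dᵐ defining P. Hence f_n acts on (P_{3m}, P_{3m+1}, P_{3m+2}) exactly as on (A, B, C), and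
Q_{k,n+1} = F_{n−1}(f_n(P_k)) transports this action to the Q's. -/

lemma B_mul_self : B * B = 1 :=
  PresentedGroup.one_of_mem (by simp [rels])

lemma B_inv : B⁻¹ = B :=
  inv_eq_of_mul_eq_one_right B_mul_self

lemma MulAut.map_zpow_conj_of_map_eq {H : Type*} [Group H] (φ : MulAut H) {g : H}
    (hg : φ g = g) (m : ℤ) (x : H) : φ (g ^ m * x * (g ^ m)⁻¹) = g ^ m * φ x * (g ^ m)⁻¹ := by
  simp only [map_mul, map_inv, map_zpow, hg]

lemma map_P_of_R {R : MulAut G} (hRA : R A = A) (hRB : R B = B * C * B⁻¹) (hRC : R C = B)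
    {P : ℤ → G} (hP0 : ∀ m : ℤ, P (3 * m) = D ^ m * A * (D ^ m)⁻¹)
    (hP1 : ∀ m : ℤ, P (3 * m + 1) = D ^ m * B * (D ^ m)⁻¹)
    (hP2 : ∀ m : ℤ, P (3 * m + 2) = D ^ m * C * (D ^ m)⁻¹)
    (m : ℤ) :
    R (P (3 * m)) = P (3 * m) ∧
    R (P (3 * m + 1)) = P (3 * m + 1) * P (3 * m + 2) * (P (3 * m + 1))⁻¹ ∧
    R (P (3 * m + 2)) = P (3 * m + 1) := by
  have hRD : R D = D := by
    rw [D, map_mul, map_mul, hRA, hRB, hRC, B_inv]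
    simp only [← mul_assoc, B_mul_self, one_mul]
  simp only [hP0, hP1, hP2, R.map_zpow_conj_of_map_eq hRD, hRA, hRB, hRC, true_and, and_true]
  group

lemma map_P_of_L {L : MulAut G} (hLA : L A = B) (hLB : L B = B * A * B⁻¹) (hLC : L C = C)
    {P : ℤ → G} (hP0 : ∀ m : ℤ, P (3 * m) = D ^ m * A * (D ^ m)⁻¹)
    (hP1 : ∀ m : ℤ, P (3 * m + 1) = D ^ m * B * (D ^ m)⁻¹)
    (hP2 : ∀ m : ℤ, P (3 * m + 2) = D ^ m * C * (D ^ m)⁻¹)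
    (m : ℤ) :
    L (P (3 * m)) = P (3 * m + 1) ∧
    L (P (3 * m + 1)) = P (3 * m + 1) * P (3 * m) * (P (3 * m + 1))⁻¹ ∧
    L (P (3 * m + 2)) = P (3 * m + 2) := by
  have hLD : L D = D := by
    rw [D, map_mul, map_mul, hLA, hLB, hLC]
    group
  simp only [hP0, hP1, hP2, L.map_zpow_conj_of_map_eq hLD, hLA, hLB, hLC, true_and, and_true]
  group

theorem stmt10_general
    (R L : MulAut G)
    (hRA : R A = A) (hRB : R B = B * C * B⁻¹) (hRC : R C = B)
    (hLA : L A = B) (hLB : L B = B * A * B⁻¹) (hLC : L C = C)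
    (P : ℤ → G)
    (hP0 : ∀ m : ℤ, P (3 * m) = D ^ m * A * (D ^ m)⁻¹)
    (hP1 : ∀ m : ℤ, P (3 * m + 1) = D ^ m * B * (D ^ m)⁻¹)
    (hP2 : ∀ m : ℤ, P (3 * m + 2) = D ^ m * C * (D ^ m)⁻¹)
    (f : ℤ → MulAut G)
    (F : ℤ → MulAut G) (hF : ∀ n : ℤ, F n = F (n - 1) * f n)
    (Q : ℤ → ℤ → G) (hQ : ∀ m n : ℤ, Q m n = F (n - 1) (P m)) :
    ∀ m n : ℤ,
      (f n = R →
        Q (3 * m) (n + 1) = Q (3 * m) n ∧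
        Q (3 * m + 1) (n + 1) = Q (3 * m + 1) n * Q (3 * m + 2) n * (Q (3 * m + 1) n)⁻¹ ∧
        Q (3 * m + 2) (n + 1) = Q (3 * m + 1) n) ∧
      (f n = L →
        Q (3 * m) (n + 1) = Q (3 * m + 1) n ∧
        Q (3 * m + 1) (n + 1) = Q (3 * m + 1) n * Q (3 * m) n * (Q (3 * m + 1) n)⁻¹ ∧
        Q (3 * m + 2) (n + 1) = Q (3 * m + 2) n) := by
  intro m n
  have hstep : ∀ k : ℤ, Q k (n + 1) = F (n - 1) (f n (P k)) := fun k => by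
    rw [hQ, add_sub_cancel_right, hF, MulAut.mul_apply]
  refine ⟨fun hfn => ?_, fun hfn => ?_⟩
  · obtain ⟨h0, h1, h2⟩ := map_P_of_R hRA hRB hRC hP0 hP1 hP2 m
    simp only [hstep, hfn, h0, h1, h2, map_mul, map_inv, ← hQ, and_self]
  · obtain ⟨h0, h1, h2⟩ := map_P_of_L hLA hLB hLC hP0 hP1 hP2 m
    simp only [hstep, hfn, h0, h1, h2, map_mul, map_inv, ← hQ, and_self]

/-- How the triple (Q_{3m,n+1}, Q_{3m+1,n+1}, Q_{3m+2,n+1}) is obtained from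
(Q_{3m,n}, Q_{3m+1,n}, Q_{3m+2,n}), according to whether f_n = R or f_n = L. -/
theorem stmt10
    (R L : MulAut G)
    (hRA : R A = A) (hRB : R B = B * C * B⁻¹) (hRC : R C = B)
    (hLA : L A = B) (hLB : L B = B * A * B⁻¹) (hLC : L C = C)
    (P : ℤ → G)
    (hP0 : ∀ m : ℤ, P (3 * m) = D ^ m * A * (D ^ m)⁻¹)
    (hP1 : ∀ m : ℤ, P (3 * m + 1) = D ^ m * B * (D ^ m)⁻¹)
    (hP2 : ∀ m : ℤ, P (3 * m + 2) = D ^ m * C * (D ^ m)⁻¹)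
    (p : ℤ) (hp : 2 ≤ p)
    (f : ℤ → MulAut G) (hfRL : ∀ n : ℤ, f n = R ∨ f n = L)
    (hfper : ∀ n : ℤ, f (n + p) = f n) (hf0 : f 0 = L) (hf1 : f 1 = R)
    (F : ℤ → MulAut G) (hF0 : F 0 = 1) (hF : ∀ n : ℤ, F n = F (n - 1) * f n)
    (Q : ℤ → ℤ → G) (hQ : ∀ m n : ℤ, Q m n = F (n - 1) (P m)) :
    ∀ m n : ℤ,
      (f n = R →
        Q (3 * m) (n + 1) = Q (3 * m) n ∧
        Q (3 * m + 1) (n + 1) = Q (3 * m + 1) n * Q (3 * m + 2) n * (Q (3 * m + 1) n)⁻¹ ∧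
        Q (3 * m + 2) (n + 1) = Q (3 * m + 1) n) ∧
      (f n = L →
        Q (3 * m) (n + 1) = Q (3 * m + 1) n ∧
        Q (3 * m + 1) (n + 1) = Q (3 * m + 1) n * Q (3 * m) n * (Q (3 * m + 1) n)⁻¹ ∧
        Q (3 * m + 2) (n + 1) = Q (3 * m + 2) n) :=
  stmt10_general R L hRA hRB hRC hLA hLB hLC P hP0 hP1 hP2 f F hF Q hQ
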